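/- Let (X,d) be a proper geodesic metric space and let ν be a Borel measure on X whose support is all of X and which is finite on bounded sets, satisfying the Bishop–Gromov inequality with parameters (K,N), where K ≤ 0 and 1 < N < ∞. Let ε₁, ε₂ > 0, let 𝒩₁ be a maximal ε₁-separated net and 𝒩₂ a maximal ε₂-separated net in X, with discretization graphs G(𝒩₁), G(𝒩₂) and combinatorial metrics 𝐝₁, 𝐝₂. Then the metric spaces (𝒩₁,𝐝₁) and (𝒩₂,𝐝₂) are roughly isometric. -/

import Mathlib

open MeasureTheory Metric

/-- The model volume density `S_K^N` for `K ≤ 0`, `1 < N < ∞`. -/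
noncomputable def SKN (K N t : ℝ) : ℝ :=
  if K = 0 then t ^ (N - 1)
  else Real.sinh (Real.sqrt (|K| / (N - 1)) * t) ^ (N - 1)

/-- A Borel measure `ν` of full support satisfies the Bishop–Gromov inequality with
parameters `(K, N)` if for every `x` the function
`r ↦ ν(B(x,r)) / ∫₀^r S_K^N(t) dt` is nonincreasing on `(0, ∞)`. -/
def BishopGromov {X : Type*} [MetricSpace X] [MeasurableSpace X]
    (ν : Measure X) (K N : ℝ) : Prop :=
  ∀ x : X, AntitoneOn
    (fun r => (ν (ball x r)).toReal / ∫ t in (0:ℝ)..r, SKN K N t) (Set.Ioi 0)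

/-- A metric space is geodesic if every pair of points is joined by a geodesic
(an isometric image of a real interval). -/
def IsGeodesicSpace (X : Type*) [MetricSpace X] : Prop :=
  ∀ x y : X, ∃ f : ℝ → X, f 0 = x ∧ f (dist x y) = y ∧
    ∀ s ∈ Set.Icc (0:ℝ) (dist x y), ∀ t ∈ Set.Icc (0:ℝ) (dist x y),
      dist (f s) (f t) = |s - t|

/-- A subset `𝒩` of a metric space is `ε`-separated if distinct points of `𝒩` are at
distance at least `ε`. -/
def IsSeparated {X : Type*} [MetricSpace X] (𝒩 : Set X) (ε : ℝ) : Prop :=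
  ∀ p ∈ 𝒩, ∀ q ∈ 𝒩, p ≠ q → ε ≤ dist p q

/-- A maximal `ε`-separated net: an `ε`-separated set maximal with respect to inclusion. -/
def IsMaximalNet {X : Type*} [MetricSpace X] (𝒩 : Set X) (ε : ℝ) : Prop :=
  IsSeparated 𝒩 ε ∧ ∀ M : Set X, 𝒩 ⊆ M → IsSeparated M ε → M = 𝒩

/-- The discretization graph `G(𝒩)`: vertices are points of `𝒩`, and distinct `p, q`
are adjacent iff `B(p,ε) ∩ B(q,ε) ≠ ∅`, equivalently `dist p q < 2ε`. -/
def netGraph {X : Type*} [MetricSpace X] (𝒩 : Set X) (ε : ℝ) : SimpleGraph 𝒩 where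
  Adj p q := p ≠ q ∧ dist (p : X) (q : X) < 2 * ε
  symm := by
    constructor
    intro p q h
    exact ⟨h.1.symm, by rw [dist_comm]; exact h.2⟩
  loopless := by
    constructor
    intro p h
    exact h.1 rfl

/-- `f` is a rough isometry from `(α, dX)` to `(β, dY)`: there are `a ≥ 1`, `b ≥ 0` with
`(1/a)·dX x₁ x₂ − b ≤ dY (f x₁) (f x₂) ≤ a·dX x₁ x₂ + b`, and `f` is `ε₁`-full for
some `ε₁ > 0`. -/
def IsRoughIsometry {α β : Type*} (dX : α → α → ℝ) (dY : β → β → ℝ) (f : α → β) : Prop :=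
  (∃ a : ℝ, 1 ≤ a ∧ ∃ b : ℝ, 0 ≤ b ∧ ∀ x₁ x₂ : α,
    (1 / a) * dX x₁ x₂ - b ≤ dY (f x₁) (f x₂) ∧
    dY (f x₁) (f x₂) ≤ a * dX x₁ x₂ + b) ∧
  ∃ ε₁ > (0:ℝ), ∀ y : β, ∃ x : α, dY y (f x) ≤ ε₁

/-!
Both nets are quasi-isometric to `X` itself, and composing one comparison with the inverse of the
other gives the rough isometry `p ↦` (a point of `𝒩₂` within `ε₂` of `p`). The lower bound
`d ≤ 2ε·𝐝` is immediate because edges are shorter than `2ε`. For the upper bound, a preconnected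
set (a geodesic segment) covered by the balls `B(u, ε)`, `u ∈ 𝒩`, cannot split between those
reachable from a given vertex and the others, so two vertices at distance `≤ D` are joined by a walk
staying in a ball of radius `D + ε`. Bishop–Gromov compares the measures of the disjoint balls
`B(u, ε/2)` with that of a ball of fixed radius, which bounds the number of net points in such a
ball uniformly, hence the length of the walk; chaining along a geodesic makes the bound linear.
-/

def IsQuasiIsometricEmbedding {α X : Type*} [PseudoMetricSpace X] (d : α → α → ℝ) (i : α → X) :
    Prop :=
  ∃ A B : ℝ, 1 ≤ A ∧ 0 ≤ B ∧ ∀ a a' : α,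
    d a a' ≤ A * dist (i a) (i a') + B ∧ dist (i a) (i a') ≤ A * d a a' + B

theorem IsQuasiIsometricEmbedding.isRoughIsometry {α β X : Type*} [PseudoMetricSpace X]
    {dα : α → α → ℝ} {dβ : β → β → ℝ} {i : α → X} {j : β → X}
    (hi : IsQuasiIsometricEmbedding dα i) (hj : IsQuasiIsometricEmbedding dβ j)
    {f : α → β} {c : ℝ} (hc : 0 ≤ c) (hf : ∀ a, dist (i a) (j (f a)) ≤ c)
    (hdense : ∀ b, ∃ a, dist (j b) (i a) ≤ c) :
    IsRoughIsometry dα dβ f := by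
  obtain ⟨Aα, Bα, hAα, hBα, hi⟩ := hi
  obtain ⟨Aβ, Bβ, hAβ, hBβ, hj⟩ := hj
  have hi_near : ∀ a a', dist (i a) (i a') ≤ dist (j (f a)) (j (f a')) + 2 * c := fun a a' => by
    linarith [dist_triangle4 (i a) (j (f a)) (j (f a')) (i a'), hf a, dist_comm (i a') (j (f a')),
      hf a']
  have hj_near : ∀ a a', dist (j (f a)) (j (f a')) ≤ dist (i a) (i a') + 2 * c := fun a a' => by
    linarith [dist_triangle4 (j (f a)) (i a) (i a') (j (f a')), hf a, dist_comm (i a) (j (f a)),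
      hf a']
  set a := Aα * Aβ
  set b := Aα * (Bβ + 2 * c) + Bα + Aβ * (Bα + 2 * c) + Bβ
  have ha : 1 ≤ a := one_le_mul_of_one_le_of_one_le hAα hAβ
  have hb : 0 ≤ b := by positivity
  refine ⟨⟨a, ha, b, hb, fun x y => ⟨?_, ?_⟩⟩, b + 1, by linarith, fun y => ?_⟩
  · have hα : dα x y ≤ a * dβ (f x) (f y) + b := by
      calc dα x y ≤ Aα * dist (i x) (i y) + Bα := (hi x y).1
        _ ≤ Aα * (Aβ * dβ (f x) (f y) + Bβ + 2 * c) + Bα := by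
          gcongr
          linarith [hi_near x y, (hj (f x) (f y)).2]
        _ ≤ a * dβ (f x) (f y) + b := by nlinarith
    calc 1 / a * dα x y - b ≤ 1 / a * (a * dβ (f x) (f y) + b) - b := by gcongr
      _ = dβ (f x) (f y) + (b / a - b) := by field_simp; ring
      _ ≤ dβ (f x) (f y) := by linarith [div_le_self hb ha]
  · calc dβ (f x) (f y) ≤ Aβ * dist (j (f x)) (j (f y)) + Bβ := (hj _ _).1
      _ ≤ Aβ * (Aα * dα x y + Bα + 2 * c) + Bβ := by
        gcongr
        linarith [hj_near x y, (hi x y).2]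
      _ ≤ a * dα x y + b := by nlinarith
  · obtain ⟨x, hx⟩ := hdense y
    refine ⟨x, ?_⟩
    calc dβ y (f x) ≤ Aβ * dist (j y) (j (f x)) + Bβ := (hj _ _).1
      _ ≤ Aβ * (2 * c) + Bβ := by
        gcongr
        linarith [dist_triangle (j y) (i x) (j (f x)), hf x]
      _ ≤ b + 1 := by nlinarith

section Geodesic

variable {X : Type*} [MetricSpace X]

theorem IsGeodesicSpace.exists_dist_eq (hgeo : IsGeodesicSpace X) (x y : X) {t : ℝ}
    (ht₀ : 0 ≤ t) (ht : t ≤ dist x y) : ∃ m, dist x m = t ∧ dist m y = dist x y - t := by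
  obtain ⟨γ, hγ₀, hγ₁, hγ⟩ := hgeo x y
  have h₀ := hγ 0 ⟨le_rfl, dist_nonneg⟩ t ⟨ht₀, ht⟩
  have h₁ := hγ t ⟨ht₀, ht⟩ _ ⟨dist_nonneg, le_rfl⟩
  rw [hγ₀] at h₀
  rw [hγ₁] at h₁
  exact ⟨γ t, by rw [h₀, zero_sub, abs_neg, abs_of_nonneg ht₀],
    by rw [h₁, abs_sub_comm, abs_of_nonneg (by linarith)]⟩

theorem IsGeodesicSpace.exists_isPreconnected (hgeo : IsGeodesicSpace X) (x y : X) :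
    ∃ S : Set X, IsPreconnected S ∧ x ∈ S ∧ y ∈ S ∧ S ⊆ closedBall x (dist x y) := by
  obtain ⟨γ, hγ₀, hγ₁, hγ⟩ := hgeo x y
  have hγ_cont : ContinuousOn γ (Set.Icc 0 (dist x y)) :=
    (LipschitzOnWith.of_dist_le_mul (K := 1) fun s hs t ht => by
      rw [hγ s hs t ht, Real.dist_eq, NNReal.coe_one, one_mul]).continuousOn
  refine ⟨γ '' Set.Icc 0 (dist x y), isPreconnected_Icc.image γ hγ_cont,
    ⟨0, ⟨le_rfl, dist_nonneg⟩, hγ₀⟩, ⟨dist x y, ⟨dist_nonneg, le_rfl⟩, hγ₁⟩, ?_⟩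
  rintro _ ⟨t, ht, rfl⟩
  have h₀ := hγ t ht 0 ⟨le_rfl, dist_nonneg⟩
  rw [hγ₀, sub_zero, abs_of_nonneg ht.1] at h₀
  exact mem_closedBall.2 (h₀.trans_le ht.2)

end Geodesic

section Nets

variable {X : Type*} [MetricSpace X] {𝒩 : Set X} {ε : ℝ}

theorem IsSeparated.mono {𝒩' : Set X} (h : IsSeparated 𝒩 ε) (h' : 𝒩' ⊆ 𝒩) :
    IsSeparated 𝒩' ε :=
  fun p hp q hq hpq => h p (h' hp) q (h' hq) hpq

theorem IsMaximalNet.exists_dist_lt (hnet : IsMaximalNet 𝒩 ε) (hε : 0 < ε) (x : X) :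
    ∃ p : 𝒩, dist x p < ε := by
  by_contra! hfar
  have hsep : IsSeparated (insert x 𝒩) ε := by
    rintro p (rfl | hp) q (rfl | hq) hpq
    · exact absurd rfl hpq
    · exact hfar ⟨q, hq⟩
    · exact dist_comm p q ▸ hfar ⟨p, hp⟩
    · exact hnet.1 p hp q hq hpq
  have hx : x ∈ 𝒩 := hnet.2 _ (Set.subset_insert x 𝒩) hsep ▸ Set.mem_insert x 𝒩
  linarith [hfar ⟨x, hx⟩, dist_self x]

theorem dist_le_two_mul_walk_length {p q : 𝒩} (w : (netGraph 𝒩 ε).Walk p q) :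
    dist (p : X) q ≤ 2 * ε * w.length := by
  induction w with
  | nil => simp
  | @cons a b c hab w ih =>
    rw [SimpleGraph.Walk.length_cons, Nat.cast_succ]
    linarith [dist_triangle (a : X) b c, hab.2]

theorem exists_walk_of_isPreconnected (hcover : ∀ x : X, ∃ p : 𝒩, dist x p < ε)
    {S : Set X} (hS : IsPreconnected S) {r s : 𝒩} {R : ℝ} (hr : (r : X) ∈ S) (hs : (s : X) ∈ S)
    (hSR : S ⊆ closedBall (r : X) R) :
    ∃ w : (netGraph 𝒩 ε).Walk r s, ∀ v ∈ w.support, dist (v : X) r ≤ R + ε := by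
  let Good (u : 𝒩) : Prop :=
    ∃ w : (netGraph 𝒩 ε).Walk r u, ∀ v ∈ w.support, dist (v : X) r ≤ R + ε
  have extend {u v : 𝒩} (hu : Good u) (huv : dist (u : X) v < 2 * ε)
      (hv : dist (v : X) r ≤ R + ε) : Good v := by
    obtain ⟨w, hw⟩ := hu
    by_cases h : u = v
    · exact h ▸ ⟨w, hw⟩
    have hadj : (netGraph 𝒩 ε).Adj u v := ⟨h, huv⟩
    refine ⟨w.concat hadj, fun x hx => ?_⟩
    simp only [SimpleGraph.Walk.support_concat, List.mem_append, List.mem_singleton] at hx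
    rcases hx with hx | rfl
    exacts [hw x hx, hv]
  have near {u : 𝒩} {x : X} (hx : x ∈ S) (hxu : dist x u < ε) : dist (u : X) r ≤ R + ε := by
    linarith [dist_triangle (u : X) x r, dist_comm x u, mem_closedBall.1 (hSR hx)]
  have hε : 0 < ε := dist_nonneg.trans_lt (hcover r).choose_spec
  have hgood_r : Good r := ⟨.nil, by simpa using near (u := r) hr (by simpa using hε)⟩
  let U := ⋃ (u : 𝒩) (_ : Good u), ball (u : X) ε
  let V := ⋃ (u : 𝒩) (_ : ¬Good u), ball (u : X) ε
  have hSUV : S ⊆ U ∪ V := fun x _ => by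
    obtain ⟨u, hxu⟩ := hcover x
    by_cases hu : Good u
    · exact Or.inl (Set.mem_biUnion hu (mem_ball.2 hxu))
    · exact Or.inr (Set.mem_biUnion hu (mem_ball.2 hxu))
  have hSV : ¬ (S ∩ V).Nonempty := fun hne => by
    obtain ⟨x, hxS, hxU, hxV⟩ := hS U V (isOpen_biUnion fun _ _ => isOpen_ball)
      (isOpen_biUnion fun _ _ => isOpen_ball) hSUV
      ⟨r, hr, Set.mem_biUnion hgood_r (mem_ball_self hε)⟩ hne
    obtain ⟨u, hu, hxu⟩ := Set.mem_iUnion₂.1 hxU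
    obtain ⟨v, hv, hxv⟩ := Set.mem_iUnion₂.1 hxV
    have huv : dist (u : X) v < 2 * ε := by
      linarith [dist_triangle_left (u : X) v x, mem_ball.1 hxu, mem_ball.1 hxv]
    exact hv (extend hu huv (near hxS hxv))
  obtain ⟨u, hsu⟩ := hcover s
  have hu : Good u := by
    by_contra hu
    exact hSV ⟨s, hs, Set.mem_biUnion hu (mem_ball.2 hsu)⟩
  exact extend hu (by rw [dist_comm]; linarith) (near (u := s) hs (by simpa using hε))

theorem exists_walk_support_subset_closedBall (hgeo : IsGeodesicSpace X)
    (hcover : ∀ x : X, ∃ p : 𝒩, dist x p < ε) (r s : 𝒩) :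
    ∃ w : (netGraph 𝒩 ε).Walk r s, ∀ v ∈ w.support, dist (v : X) r ≤ dist (r : X) s + ε := by
  obtain ⟨S, hS, hr, hs, hSR⟩ := hgeo.exists_isPreconnected r s
  exact exists_walk_of_isPreconnected hcover hS hr hs hSR

theorem netGraph_preconnected (hgeo : IsGeodesicSpace X)
    (hcover : ∀ x : X, ∃ p : 𝒩, dist x p < ε) : (netGraph 𝒩 ε).Preconnected := fun r s =>
  ⟨(exists_walk_support_subset_closedBall hgeo hcover r s).choose⟩

theorem netGraph_dist_le_of_packing (hgeo : IsGeodesicSpace X)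
    (hcover : ∀ x : X, ∃ p : 𝒩, dist x p < ε) (hsep : IsSeparated 𝒩 ε) {R C : ℝ}
    (hpack : ∀ (x : X) (F : Finset X), IsSeparated (F : Set X) ε →
      (F : Set X) ⊆ closedBall x R → (F.card : ℝ) ≤ C)
    {r s : 𝒩} (hrs : dist (r : X) s + ε ≤ R) : ((netGraph 𝒩 ε).dist r s : ℝ) ≤ C := by
  classical
  obtain ⟨w, hw⟩ := exists_walk_support_subset_closedBall hgeo hcover r s
  let p := w.toPath
  let F : Finset X := p.1.support.toFinset.map (Function.Embedding.subtype _)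
  have hF_card : F.card = p.1.length + 1 := by
    rw [Finset.card_map, List.toFinset_card_of_nodup p.2.support_nodup,
      SimpleGraph.Walk.length_support]
  have hF𝒩 : (F : Set X) ⊆ 𝒩 := by
    intro x hx
    obtain ⟨v, -, rfl⟩ := Finset.mem_map.1 hx
    exact v.2
  have hF_ball : (F : Set X) ⊆ closedBall (r : X) R := by
    intro x hx
    obtain ⟨v, hv, rfl⟩ := Finset.mem_map.1 hx
    have := hw v (w.support_toPath_subset_support (List.mem_toFinset.1 hv))
    exact mem_closedBall.2 (by simp only [Function.Embedding.coe_subtype]; linarith)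
  have := hpack r F (hsep.mono hF𝒩) hF_ball
  rw [hF_card, Nat.cast_succ] at this
  have hdist : (netGraph 𝒩 ε).dist r s ≤ p.1.length := SimpleGraph.dist_le p.1
  have : ((netGraph 𝒩 ε).dist r s : ℝ) ≤ p.1.length := by exact_mod_cast hdist
  linarith

theorem netGraph_dist_le_linear (hgeo : IsGeodesicSpace X)
    (hcover : ∀ x : X, ∃ p : 𝒩, dist x p < ε) {C : ℝ}
    (hloc : ∀ r s : 𝒩, dist (r : X) s ≤ 3 * ε → ((netGraph 𝒩 ε).dist r s : ℝ) ≤ C)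
    (r s : 𝒩) : ((netGraph 𝒩 ε).dist r s : ℝ) ≤ C * (dist (r : X) s / ε + 2) := by
  have hε : 0 < ε := dist_nonneg.trans_lt (hcover r).choose_spec
  have hC : 0 ≤ C := by simpa using hloc r r (by simp only [dist_self]; positivity)
  have chain : ∀ n : ℕ, ∀ r s : 𝒩, dist (r : X) s ≤ (n + 2) * ε →
      ((netGraph 𝒩 ε).dist r s : ℝ) ≤ (n + 1) * C := by
    intro n
    induction n with
    | zero => exact fun r s hrs => by simpa using hloc r s (by push_cast at hrs; linarith)
    | succ n ih =>
      intro r s hrs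
      push_cast at hrs ⊢
      by_cases hnear : dist (r : X) s ≤ 3 * ε
      · nlinarith [hloc r s hnear]
      obtain ⟨m, hrm, hms⟩ := hgeo.exists_dist_eq r s (by positivity : 0 ≤ 2 * ε) (by linarith)
      obtain ⟨u, hmu⟩ := hcover m
      have hru := hloc r u (by linarith [dist_triangle (r : X) m u])
      have hus := ih u s (by linarith [dist_triangle_left (u : X) s m])
      have htri : ((netGraph 𝒩 ε).dist r s : ℝ) ≤ (netGraph 𝒩 ε).dist r u +
          (netGraph 𝒩 ε).dist u s := by
        exact_mod_cast (netGraph_preconnected hgeo hcover r u).dist_triangle_left s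
      linarith
  have hn := Nat.ceil_lt_add_one (div_nonneg (dist_nonneg (x := (r : X)) (y := s)) hε.le)
  have hle : dist (r : X) s ≤ (⌈dist (r : X) s / ε⌉₊ + 2) * ε := by
    have := (div_le_iff₀ hε).1 (Nat.le_ceil (dist (r : X) s / ε))
    nlinarith
  calc ((netGraph 𝒩 ε).dist r s : ℝ) ≤ (⌈dist (r : X) s / ε⌉₊ + 1) * C := chain _ r s hle
    _ ≤ C * (dist (r : X) s / ε + 2) := by nlinarith

theorem IsMaximalNet.isQuasiIsometricEmbedding (hnet : IsMaximalNet 𝒩 ε) (hε : 0 < ε)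
    (hgeo : IsGeodesicSpace X)
    (hpack : ∃ C : ℝ, ∀ (x : X) (F : Finset X), IsSeparated (F : Set X) ε →
      (F : Set X) ⊆ closedBall x (4 * ε) → (F.card : ℝ) ≤ C) :
    IsQuasiIsometricEmbedding (fun p q => ((netGraph 𝒩 ε).dist p q : ℝ)) ((↑) : 𝒩 → X) := by
  obtain ⟨C₀, hC₀⟩ := hpack
  set C := max C₀ 0
  have hcover := hnet.exists_dist_lt hε
  have hloc (r s : 𝒩) (hrs : dist (r : X) s ≤ 3 * ε) : ((netGraph 𝒩 ε).dist r s : ℝ) ≤ C :=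
    netGraph_dist_le_of_packing hgeo hcover hnet.1
      (fun x F hF hFx => (hC₀ x F hF hFx).trans (le_max_left _ _)) (by linarith)
  have hC : 0 ≤ C / ε := div_nonneg (le_max_right _ _) hε.le
  refine ⟨2 * ε + C / ε + 1, 2 * C, by linarith, by positivity, fun p q => ⟨?_, ?_⟩⟩
  · have := netGraph_dist_le_linear hgeo hcover hloc p q
    have : C / ε * dist (p : X) q ≤ (2 * ε + C / ε + 1) * dist (p : X) q := by
      gcongr; linarith
    calc ((netGraph 𝒩 ε).dist p q : ℝ) ≤ C * (dist (p : X) q / ε + 2) := by assumption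
      _ = C / ε * dist (p : X) q + 2 * C := by ring
      _ ≤ _ := by linarith
  · obtain ⟨w, hw⟩ := (netGraph_preconnected hgeo hcover p q).exists_walk_length_eq_dist
    have hdist : dist (p : X) q ≤ 2 * ε * ((netGraph 𝒩 ε).dist p q : ℝ) :=
      hw ▸ dist_le_two_mul_walk_length w
    have : 2 * ε * ((netGraph 𝒩 ε).dist p q : ℝ) ≤
        (2 * ε + C / ε + 1) * ((netGraph 𝒩 ε).dist p q : ℝ) := by
      gcongr; linarith
    show dist (p : X) q ≤ (2 * ε + C / ε + 1) * ((netGraph 𝒩 ε).dist p q : ℝ) + 2 * C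
    linarith [le_max_right C₀ 0]

end Nets

section BishopGromov

variable {K N : ℝ}

theorem continuous_SKN (hN : 1 < N) : Continuous (SKN K N) := by
  have hpow : Continuous fun t : ℝ => t ^ (N - 1) :=
    continuous_iff_continuousAt.2 fun t => Real.continuousAt_rpow_const t _ (Or.inr (by linarith))
  unfold SKN
  split_ifs
  · exact hpow
  · exact hpow.comp (Real.continuous_sinh.comp (continuous_const.mul continuous_id))

theorem SKN_pos {t : ℝ} (hN : 1 < N) (ht : 0 < t) : 0 < SKN K N t := by
  unfold SKN
  split_ifs with hK
  · exact Real.rpow_pos_of_pos ht _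
  · have hc : 0 < Real.sqrt (|K| / (N - 1)) :=
      Real.sqrt_pos.2 (div_pos (abs_pos.2 hK) (by linarith))
    exact Real.rpow_pos_of_pos (Real.sinh_pos_iff.2 (mul_pos hc ht)) _

theorem integral_SKN_pos {r : ℝ} (hN : 1 < N) (hr : 0 < r) : 0 < ∫ t in (0 : ℝ)..r, SKN K N t :=
  intervalIntegral.intervalIntegral_pos_of_pos_on ((continuous_SKN hN).intervalIntegrable 0 r)
    (fun _ ht => SKN_pos hN ht.1) hr

variable {X : Type*} [MetricSpace X] [MeasurableSpace X] {ν : Measure X}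

theorem BishopGromov.measure_ball_le (hBG : BishopGromov ν K N) (hN : 1 < N) (x : X)
    {r R : ℝ} (hr : 0 < r) (hrR : r ≤ R) :
    (ν (ball x R)).toReal ≤
      (∫ t in (0 : ℝ)..R, SKN K N t) / (∫ t in (0 : ℝ)..r, SKN K N t) * (ν (ball x r)).toReal := by
  have hIr := integral_SKN_pos (K := K) hN hr
  have hIR := integral_SKN_pos (K := K) hN (hr.trans_le hrR)
  have := hBG x hr (hr.trans_le hrR) hrR
  rw [div_le_div_iff₀ hIR hIr] at this
  rw [div_mul_eq_mul_div, le_div_iff₀ hIr]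
  linarith

theorem BishopGromov.exists_card_le [BorelSpace X] (hBG : BishopGromov ν K N) (hN : 1 < N)
    (hfull : ∀ x : X, ∀ r > (0 : ℝ), 0 < ν (ball x r))
    (hbdd : ∀ s : Set X, Bornology.IsBounded s → ν s < ⊤) {ε R : ℝ} (hε : 0 < ε) (hR : 0 ≤ R) :
    ∃ C : ℝ, ∀ (x : X) (F : Finset X), IsSeparated (F : Set X) ε →
      (F : Set X) ⊆ closedBall x R → (F.card : ℝ) ≤ C := by
  set Q := (∫ t in (0 : ℝ)..(2 * R + ε / 2), SKN K N t) / (∫ t in (0 : ℝ)..(ε / 2), SKN K N t)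
  refine ⟨Q, fun x F hsep hF => ?_⟩
  have hfin (y : X) (ρ : ℝ) : ν (ball y ρ) ≠ ⊤ := (hbdd _ isBounded_ball).ne
  set V := (ν (ball x (R + ε / 2))).toReal
  have hV : 0 < V := ENNReal.toReal_pos (hfull x _ (by positivity)).ne' (hfin _ _)
  have hQ : 0 ≤ Q := div_nonneg (integral_SKN_pos hN (by positivity)).le
    (integral_SKN_pos hN (by positivity)).le
  have hdist {u : X} (hu : u ∈ F) : dist u x ≤ R := mem_closedBall.1 (hF hu)
  have hsmall : ∀ u ∈ F, V ≤ Q * (ν (ball u (ε / 2))).toReal := fun u hu =>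
    (ENNReal.toReal_mono (hfin _ _) (measure_mono (ball_subset_ball'
      (by linarith [hdist hu, dist_comm u x])))).trans
      (hBG.measure_ball_le hN u (by positivity) (by linarith))
  have hdisj : (F : Set X).PairwiseDisjoint fun u => ball u (ε / 2) := fun u hu v hv huv =>
    ball_disjoint_ball (by linarith [hsep u hu v hv huv])
  have hsum : ∑ u ∈ F, (ν (ball u (ε / 2))).toReal ≤ V := by
    rw [← ENNReal.toReal_sum fun u _ => hfin _ _,
      ← measure_biUnion_finset hdisj fun u _ => measurableSet_ball]
    exact ENNReal.toReal_mono (hfin _ _) (measure_mono (Set.iUnion₂_subset fun u hu =>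
      ball_subset_ball' (by linarith [hdist hu])))
  have hcard : (F.card : ℝ) * V ≤ Q * V := by
    have := Finset.card_nsmul_le_sum F _ V hsmall
    rw [nsmul_eq_mul, ← Finset.mul_sum] at this
    nlinarith
  exact le_of_mul_le_mul_right hcard hV

end BishopGromov

theorem stmt_10_general {X : Type*} [MetricSpace X]
    [MeasurableSpace X] [BorelSpace X]
    (hgeo : IsGeodesicSpace X)
    (ν : Measure X)
    (hfull : ∀ x : X, ∀ r > (0:ℝ), 0 < ν (ball x r))
    (hbdd : ∀ s : Set X, Bornology.IsBounded s → ν s < ⊤)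
    (K N : ℝ) (hN : 1 < N)
    (hBG : BishopGromov ν K N)
    (ε₁ ε₂ : ℝ) (hε₁ : 0 < ε₁) (hε₂ : 0 < ε₂)
    (𝒩₁ 𝒩₂ : Set X) (hnet₁ : IsMaximalNet 𝒩₁ ε₁) (hnet₂ : IsMaximalNet 𝒩₂ ε₂) :
    ∃ f : 𝒩₁ → 𝒩₂,
      IsRoughIsometry
        (fun p q => ((netGraph 𝒩₁ ε₁).dist p q : ℝ))
        (fun p q => ((netGraph 𝒩₂ ε₂).dist p q : ℝ)) f := by
  have hqie₁ := hnet₁.isQuasiIsometricEmbedding hε₁ hgeo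
    (hBG.exists_card_le hN hfull hbdd hε₁ (by positivity))
  have hqie₂ := hnet₂.isQuasiIsometricEmbedding hε₂ hgeo
    (hBG.exists_card_le hN hfull hbdd hε₂ (by positivity))
  choose f hf using fun p : 𝒩₁ => hnet₂.exists_dist_lt hε₂ p
  refine ⟨f, hqie₁.isRoughIsometry hqie₂ (c := ε₁ + ε₂) (by positivity)
    (fun p => by linarith [hf p]) fun q => ?_⟩
  obtain ⟨p, hp⟩ := hnet₁.exists_dist_lt hε₁ q
  exact ⟨p, by linarith⟩

theorem stmt_10 {X : Type*} [MetricSpace X] [ProperSpace X]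
    [MeasurableSpace X] [BorelSpace X]
    (hgeo : IsGeodesicSpace X)
    (ν : Measure X)
    (hfull : ∀ x : X, ∀ r > (0:ℝ), 0 < ν (ball x r))
    (hbdd : ∀ s : Set X, Bornology.IsBounded s → ν s < ⊤)
    (K N : ℝ) (hK : K ≤ 0) (hN : 1 < N)
    (hBG : BishopGromov ν K N)
    (ε₁ ε₂ : ℝ) (hε₁ : 0 < ε₁) (hε₂ : 0 < ε₂)
    (𝒩₁ 𝒩₂ : Set X) (hnet₁ : IsMaximalNet 𝒩₁ ε₁) (hnet₂ : IsMaximalNet 𝒩₂ ε₂)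
    (h𝒩₁ : 𝒩₁.Nonempty) (h𝒩₂ : 𝒩₂.Nonempty) :
    ∃ f : 𝒩₁ → 𝒩₂,
      IsRoughIsometry
        (fun p q => ((netGraph 𝒩₁ ε₁).dist p q : ℝ))
        (fun p q => ((netGraph 𝒩₂ ε₂).dist p q : ℝ)) f :=
  stmt_10_general hgeo ν hfull hbdd K N hN hBG ε₁ ε₂ hε₁ hε₂ 𝒩₁ 𝒩₂ hnet₁ hnet₂
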